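/- arXiv:2406.11358 — 3 statements merged into one kernel-verified Lean document; each statement's English description precedes it below -/
import Mathlib

section
/- The function Φ₀(x) = 2/(2+|x|²) is a positive smooth radially symmetric solution of the self-similar profile equation on ℝ⁵: for all x ∈ ℝ⁵, ΔΦ₀(x) − Φ₀(x) − (1/2) x·∇Φ₀(x) + 6 Φ₀(x)² + x·∇(Φ₀²)(x) = 0. -/
open MeasureTheory Filter

noncomputable section

abbrev E5 : Type := EuclideanSpace ℝ (Fin 5)

/-- A function on `ℝᵈ` is radially symmetric. -/
def isRadial {n : ℕ} (f : EuclideanSpace ℝ (Fin n) → ℝ) : Prop :=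
  ∀ x y, ‖x‖ = ‖y‖ → f x = f y

/-- Laplacian of a scalar function on `ℝᵈ`, as the sum of second partial derivatives. -/
def lap {n : ℕ} (f : EuclideanSpace ℝ (Fin n) → ℝ) (x : EuclideanSpace ℝ (Fin n)) : ℝ :=
  ∑ i, fderiv ℝ (fun y => fderiv ℝ f y (EuclideanSpace.single i 1)) x (EuclideanSpace.single i 1)

/-- The ground state profile `Φ₀(x) = 2/(2+|x|²)`. -/
def Phi0 (x : E5) : ℝ := 2 / (2 + ‖x‖ ^ 2)

lemma gpos (x : E5) : (0:ℝ) < 2 + ‖x‖ ^ 2 := by positivity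

lemma hasFDerivAt_g (x : E5) :
    HasFDerivAt (fun y : E5 => 2 + ‖y‖ ^ 2) (2 • innerSL ℝ x) x := by
  have := (hasFDerivAt_const (2:ℝ) x).add ((hasFDerivAt_id x).norm_sq)
  refine this.congr_fderiv ?_
  ext v
  simp

lemma hasFDerivAt_Phi0 (x : E5) :
    HasFDerivAt Phi0 ((-4 / (2 + ‖x‖ ^ 2) ^ 2) • innerSL ℝ x) x := by
  have hh : HasDerivAt (fun t : ℝ => 2 / t) (-2 / (2 + ‖x‖ ^ 2) ^ 2) (2 + ‖x‖ ^ 2) := by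
    have := ((hasDerivAt_const (2 + ‖x‖ ^ 2) (2:ℝ)).div (hasDerivAt_id (2 + ‖x‖ ^ 2))
      (gpos x).ne')
    refine this.congr_deriv ?_
    simp only [id_eq]
    field_simp
    ring
  have h := hh.comp_hasFDerivAt x (hasFDerivAt_g x)
  refine h.congr_fderiv ?_
  ext v
  simp only [ContinuousLinearMap.smul_apply, smul_eq_mul, smul_smul]
  ring_nf

lemma fderiv_Phi0_apply (x v : E5) :
    fderiv ℝ Phi0 x v = -4 / (2 + ‖x‖ ^ 2) ^ 2 * (inner ℝ x v : ℝ) := by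
  rw [(hasFDerivAt_Phi0 x).fderiv]; simp

lemma hasFDerivAt_dPhi0 (x v : E5) :
    HasFDerivAt (fun y => fderiv ℝ Phi0 y v)
      ((16 * (inner ℝ x v : ℝ) / (2 + ‖x‖ ^ 2) ^ 3) • innerSL ℝ x
        + (-4 / (2 + ‖x‖ ^ 2) ^ 2) • innerSL ℝ v) x := by
  have heq : (fun y => fderiv ℝ Phi0 y v)
      = fun y : E5 => (-4 / (2 + ‖y‖ ^ 2) ^ 2) * (inner ℝ y v : ℝ) := by
    funext y; exact fderiv_Phi0_apply y v
  rw [heq]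
  have ha : HasFDerivAt (fun y : E5 => -4 / (2 + ‖y‖ ^ 2) ^ 2)
      ((16 / (2 + ‖x‖ ^ 2) ^ 3) • innerSL ℝ x) x := by
    have hh : HasDerivAt (fun t : ℝ => -4 / t ^ 2) (8 / (2 + ‖x‖ ^ 2) ^ 3) (2 + ‖x‖ ^ 2) := by
      have := ((hasDerivAt_const (2 + ‖x‖ ^ 2) (-4:ℝ)).div
        ((hasDerivAt_id (2 + ‖x‖ ^ 2)).pow 2) (pow_ne_zero 2 (gpos x).ne'))
      refine this.congr_deriv ?_
      have := (gpos x).ne'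
      simp only [id_eq, Pi.pow_apply]
      field_simp
      ring
    have h := hh.comp_hasFDerivAt x (hasFDerivAt_g x)
    refine h.congr_fderiv ?_
    ext w
    simp only [ContinuousLinearMap.smul_apply, smul_eq_mul, smul_smul]
    ring_nf
  have hb : HasFDerivAt (fun y : E5 => (inner ℝ y v : ℝ)) (innerSL ℝ v) x := by
    have : (fun y : E5 => (inner ℝ y v : ℝ)) = fun y => (innerSL ℝ v) y := by
      funext y; simp only [innerSL_apply_apply]; exact real_inner_comm v y
    rw [this]
    exact (innerSL ℝ v).hasFDerivAt
  have h := ha.mul' hb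
  refine h.congr_fderiv ?_
  ext w
  simp only [ContinuousLinearMap.add_apply, ContinuousLinearMap.smul_apply,
    ContinuousLinearMap.smulRight_apply, smul_eq_mul, op_smul_eq_mul]
  ring_nf

lemma sum_sq_eq (x : E5) : ∑ i, (x i) ^ 2 = ‖x‖ ^ 2 := by
  rw [EuclideanSpace.norm_eq, Real.sq_sqrt (by positivity)]
  simp [Real.norm_eq_abs, sq_abs]

lemma second_deriv (x : E5) (i : Fin 5) :
    fderiv ℝ (fun y => fderiv ℝ Phi0 y (EuclideanSpace.single i 1)) x
      (EuclideanSpace.single i 1)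
    = 16 * (x i) ^ 2 / (2 + ‖x‖ ^ 2) ^ 3 - 4 / (2 + ‖x‖ ^ 2) ^ 2 := by
  rw [(hasFDerivAt_dPhi0 x (EuclideanSpace.single i 1)).fderiv]
  have h1 : (inner ℝ x (EuclideanSpace.single i (1:ℝ)) : ℝ) = x i := by
    simp [EuclideanSpace.inner_single_right]
  have h2 : (inner ℝ (EuclideanSpace.single i (1:ℝ)) (EuclideanSpace.single i (1:ℝ)) : ℝ) = 1 := by
    simp [EuclideanSpace.inner_single_right]
  simp only [ContinuousLinearMap.add_apply, ContinuousLinearMap.smul_apply, innerSL_apply_apply,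
    smul_eq_mul, h1, h2]
  ring

lemma lap_Phi0 (x : E5) :
    lap Phi0 x = 16 * ‖x‖ ^ 2 / (2 + ‖x‖ ^ 2) ^ 3 - 20 / (2 + ‖x‖ ^ 2) ^ 2 := by
  unfold lap
  simp_rw [second_deriv x]
  rw [Finset.sum_sub_distrib, Finset.sum_const, ← Finset.sum_div]
  simp_rw [mul_div_assoc, ← Finset.mul_sum, sum_sq_eq x]
  simp
  ring

lemma fderiv_Phi0_self (x : E5) :
    fderiv ℝ Phi0 x x = -4 * ‖x‖ ^ 2 / (2 + ‖x‖ ^ 2) ^ 2 := by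
  rw [fderiv_Phi0_apply, real_inner_self_eq_norm_sq]; ring

lemma fderiv_Phi0_sq_self (x : E5) :
    fderiv ℝ (fun y => Phi0 y ^ 2) x x = -16 * ‖x‖ ^ 2 / (2 + ‖x‖ ^ 2) ^ 3 := by
  have h := (hasFDerivAt_Phi0 x).mul (hasFDerivAt_Phi0 x)
  have heq : (fun y => Phi0 y ^ 2) = fun y => Phi0 y * Phi0 y := by
    funext y; ring
  rw [heq, show (fun y => Phi0 y * Phi0 y) = Phi0 * Phi0 from rfl, h.fderiv]
  have hg := (gpos x).ne'
  simp only [ContinuousLinearMap.add_apply, ContinuousLinearMap.smul_apply,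
    ContinuousLinearMap.smulRight_apply, innerSL_apply_apply, smul_eq_mul,
    real_inner_self_eq_norm_sq, Phi0]
  field_simp
  ring

/-- `Φ₀(x) = 2/(2+|x|²)` is a positive smooth radially symmetric solution of the
self-similar profile equation `ΔΦ − Φ − (1/2) x·∇Φ + 6Φ² + x·∇(Φ²) = 0` on `ℝ⁵`. -/
theorem Phi0_solves_profile_equation :
    (∀ x : E5, 0 < Phi0 x) ∧
    ContDiff ℝ (⊤ : ℕ∞) Phi0 ∧
    isRadial Phi0 ∧
    ∀ x : E5,
      lap Phi0 x - Phi0 x - (1 / 2) * fderiv ℝ Phi0 x x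
        + 6 * Phi0 x ^ 2 + fderiv ℝ (fun y => Phi0 y ^ 2) x x = 0 := by
  refine ⟨fun x => by unfold Phi0; positivity, ?_, fun x y h => by unfold Phi0; rw [h], fun x => ?_⟩
  · exact contDiff_const.div (contDiff_const.add (contDiff_norm_sq ℝ)) fun x => (gpos x).ne'
  · rw [lap_Phi0, fderiv_Phi0_self, fderiv_Phi0_sq_self]
    unfold Phi0
    have hg := (gpos x).ne'
    field_simp
    ring
end
end

section
/- Let Φ : ℝ⁵ → ℝ be a smooth function solving the self-similar profile equation ΔΦ − Φ − (1/2) x·∇Φ + 6Φ² + x·∇(Φ²) = 0 on ℝ⁵. Then the function v := ΛΦ = 2Φ + x·∇Φ is an eigenfunction of the linearized operator with eigenvalue −1: for all x ∈ ℝ⁵, −Δv(x) + v(x) + (1/2) x·∇v(x) − 2 x·∇(Φ v)(x) − 12 Φ(x) v(x) = −v(x). -/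
open MeasureTheory Filter

noncomputable section

section Aux

variable {F : Type*} [NormedAddCommGroup F] [NormedSpace ℝ F]

lemma fderiv_apply_const {g : E5 → (E5 →L[ℝ] F)} {x : E5} (hg : DifferentiableAt ℝ g x)
    (u w : E5) : fderiv ℝ (fun y => g y u) x w = fderiv ℝ g x w u := by
  rw [fderiv_clm_apply hg (differentiableAt_const u)]
  simp

lemma fderiv_apply_id {g : E5 → (E5 →L[ℝ] F)} {x : E5} (hg : DifferentiableAt ℝ g x)
    (w : E5) : fderiv ℝ (fun y => g y y) x w = fderiv ℝ g x w x + g x w := by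
  rw [fderiv_clm_apply hg differentiableAt_fun_id]
  simp [add_comm]

end Aux

section Smooth

local notation "e" i => EuclideanSpace.single i (1:ℝ)

variable {f : E5 → ℝ} (hf : ContDiff ℝ (⊤ : ℕ∞) f)
include hf

lemma c1 : ContDiff ℝ (⊤ : ℕ∞) (fderiv ℝ f) := hf.fderiv_right (m := (⊤ : ℕ∞)) (by simp)
lemma c2 : ContDiff ℝ (⊤ : ℕ∞) (fderiv ℝ (fderiv ℝ f)) := (c1 hf).fderiv_right (m := (⊤ : ℕ∞)) (by simp)
lemma d0 : Differentiable ℝ f := hf.differentiable (by simp)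
lemma d1 : Differentiable ℝ (fderiv ℝ f) := (c1 hf).differentiable (by simp)
lemma d2 : Differentiable ℝ (fderiv ℝ (fderiv ℝ f)) := (c2 hf).differentiable (by simp)

/-- second-derivative symmetry -/
lemma symm2 (x u w : E5) :
    fderiv ℝ (fderiv ℝ f) x u w = fderiv ℝ (fderiv ℝ f) x w u :=
  second_derivative_symmetric (fun y => ((d0 hf) y).hasFDerivAt)
    ((d1 hf x).hasFDerivAt) u w

/-- third-derivative symmetry in the first two slots -/
lemma symm3a (x a b c : E5) :
    fderiv ℝ (fderiv ℝ (fderiv ℝ f)) x a b c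
      = fderiv ℝ (fderiv ℝ (fderiv ℝ f)) x b a c := by
  have h := second_derivative_symmetric (f := fderiv ℝ f)
    (fun y => ((d1 hf) y).hasFDerivAt) ((d2 hf x).hasFDerivAt) a b
  rw [h]

/-- derivative of `y ↦ f''(y) u u'` -/
lemma fderiv_snd_apply (x u u' w : E5) :
    fderiv ℝ (fun y => fderiv ℝ (fderiv ℝ f) y u u') x w
      = fderiv ℝ (fderiv ℝ (fderiv ℝ f)) x w u u' := by
  have hg : DifferentiableAt ℝ (fun y => fderiv ℝ (fderiv ℝ f) y u) x :=
    ((d2 hf x).clm_apply (differentiableAt_const u))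
  rw [fderiv_apply_const hg u' w, fderiv_apply_const (d2 hf x) u w]

/-- third-derivative symmetry in last two slots -/
lemma symm3b (x a b c : E5) :
    fderiv ℝ (fderiv ℝ (fderiv ℝ f)) x a b c
      = fderiv ℝ (fderiv ℝ (fderiv ℝ f)) x a c b := by
  rw [← fderiv_snd_apply hf x b c a, ← fderiv_snd_apply hf x c b a]
  have hfun : (fun y => fderiv ℝ (fderiv ℝ f) y b c)
      = (fun y => fderiv ℝ (fderiv ℝ f) y c b) := funext fun y => symm2 hf y b c
  rw [hfun]

lemma lap_eq (x : E5) : lap f x = ∑ i, fderiv ℝ (fderiv ℝ f) x (e i) (e i) := by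
  unfold lap
  refine Finset.sum_congr rfl fun i _ => ?_
  exact fderiv_apply_const (d1 hf x) _ _

lemma lap_fun_eq : lap f = fun x => ∑ i, fderiv ℝ (fderiv ℝ f) x (e i) (e i) :=
  funext (lap_eq hf)

lemma diff_snd_apply (u u' : E5) :
    Differentiable ℝ (fun y => fderiv ℝ (fderiv ℝ f) y u u') :=
  ((d2 hf).clm_apply (differentiable_const u)).clm_apply (differentiable_const u')

lemma lap_differentiable : Differentiable ℝ (lap f) := by
  rw [lap_fun_eq hf]
  exact Differentiable.fun_sum fun i _ => diff_snd_apply hf _ _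

lemma fderiv_lap (x w : E5) :
    fderiv ℝ (lap f) x w = ∑ i, fderiv ℝ (fderiv ℝ (fderiv ℝ f)) x w (e i) (e i) := by
  rw [lap_fun_eq hf]
  rw [fderiv_fun_sum (fun i _ => (diff_snd_apply hf _ _) x)]
  rw [ContinuousLinearMap.sum_apply]
  exact Finset.sum_congr rfl fun i _ => fderiv_snd_apply hf x _ _ w

/-- derivative of `y ↦ f'(y) y` -/
lemma fderiv_Df (x w : E5) :
    fderiv ℝ (fun y => fderiv ℝ f y y) x w
      = fderiv ℝ (fderiv ℝ f) x w x + fderiv ℝ f x w :=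
  fderiv_apply_id (d1 hf x) w

lemma Df_differentiable : Differentiable ℝ (fun y => fderiv ℝ f y y) :=
  (d1 hf).clm_apply differentiable_id

/-- Laplacian commutator: `Δ(x·∇f) = x·∇(Δf) + 2Δf`. -/
lemma lap_Df (x : E5) :
    lap (fun y => fderiv ℝ f y y) x = fderiv ℝ (lap f) x x + 2 * lap f x := by
  rw [fderiv_lap hf x x, lap_eq hf x]
  unfold lap
  have step : ∀ i : Fin 5,
      fderiv ℝ (fun y => fderiv ℝ (fun z => fderiv ℝ f z z) y (e i)) x (e i)
        = fderiv ℝ (fderiv ℝ (fderiv ℝ f)) x x (e i) (e i)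
          + 2 * fderiv ℝ (fderiv ℝ f) x (e i) (e i) := by
    intro i
    have hfun : (fun y => fderiv ℝ (fun z => fderiv ℝ f z z) y (e i))
        = fun y => fderiv ℝ (fderiv ℝ f) y (e i) y + fderiv ℝ f y (e i) :=
      funext fun y => fderiv_Df hf y (e i)
    rw [hfun]
    have hd1 : DifferentiableAt ℝ (fun y => fderiv ℝ (fderiv ℝ f) y (e i) y) x :=
      (((d2 hf).clm_apply (differentiable_const _)).clm_apply differentiable_id) x
    have hd2 : DifferentiableAt ℝ (fun y => fderiv ℝ f y (e i)) x :=
      ((d1 hf).clm_apply (differentiable_const _)) x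
    rw [fderiv_fun_add hd1 hd2, ContinuousLinearMap.add_apply]
    have h1 : fderiv ℝ (fun y => fderiv ℝ (fderiv ℝ f) y (e i) y) x (e i)
        = fderiv ℝ (fderiv ℝ (fderiv ℝ f)) x (e i) (e i) x
          + fderiv ℝ (fderiv ℝ f) x (e i) (e i) := by
      have := fderiv_apply_id (g := fun y => fderiv ℝ (fderiv ℝ f) y (e i))
        (((d2 hf).clm_apply (differentiable_const _)) x) (e i)
      rw [this, fderiv_apply_const (d2 hf x) (e i) (e i)]
    have h2 : fderiv ℝ (fun y => fderiv ℝ f y (e i)) x (e i)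
        = fderiv ℝ (fderiv ℝ f) x (e i) (e i) :=
      fderiv_apply_const (d1 hf x) _ _
    rw [h1, h2]
    have hsymm : fderiv ℝ (fderiv ℝ (fderiv ℝ f)) x (e i) (e i) x
        = fderiv ℝ (fderiv ℝ (fderiv ℝ f)) x x (e i) (e i) := by
      rw [symm3b hf x (e i) (e i) x, symm3a hf x (e i) x (e i)]
    rw [hsymm]; ring
  rw [Finset.sum_congr rfl (fun i _ => step i)]
  rw [Finset.sum_add_distrib, ← Finset.mul_sum]

lemma cDf : ContDiff ℝ (⊤ : ℕ∞) (fun y => fderiv ℝ f y y) := (c1 hf).clm_apply contDiff_id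

end Smooth

section LapAlg

local notation "e" i => EuclideanSpace.single i (1:ℝ)

lemma lap_add {f g : E5 → ℝ} (hf : ContDiff ℝ (⊤ : ℕ∞) f) (hg : ContDiff ℝ (⊤ : ℕ∞) g) (x : E5) :
    lap (fun y => f y + g y) x = lap f x + lap g x := by
  unfold lap
  rw [← Finset.sum_add_distrib]
  refine Finset.sum_congr rfl fun i _ => ?_
  have hfun : (fun y => fderiv ℝ (fun z => f z + g z) y (e i))
      = fun y => fderiv ℝ f y (e i) + fderiv ℝ g y (e i) := by
    funext y
    rw [fderiv_fun_add ((d0 hf) y) ((d0 hg) y)]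
    simp
  rw [hfun, fderiv_fun_add (((d1 hf).clm_apply (differentiable_const _)) x)
    (((d1 hg).clm_apply (differentiable_const _)) x)]
  simp

lemma lap_const_mul {f : E5 → ℝ} (hf : ContDiff ℝ (⊤ : ℕ∞) f) (c : ℝ) (x : E5) :
    lap (fun y => c * f y) x = c * lap f x := by
  unfold lap
  rw [Finset.mul_sum]
  refine Finset.sum_congr rfl fun i _ => ?_
  have hfun : (fun y => fderiv ℝ (fun z => c * f z) y (e i))
      = fun y => c * fderiv ℝ f y (e i) := by
    funext y
    rw [fderiv_const_mul ((d0 hf) y) c]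
    simp
  rw [hfun, fderiv_const_mul (((d1 hf).clm_apply (differentiable_const _)) x) c]
  simp

end LapAlg

/-- If `Φ` solves the self-similar profile equation on `ℝ⁵`, then `ΛΦ = 2Φ + x·∇Φ` is an
eigenfunction of the linearized operator `L v = −Δv + v + (1/2)x·∇v − 2x·∇(Φv) − 12Φv`
with eigenvalue `−1`.  Here `x·∇f(x)` is written `fderiv ℝ f x x`. -/
theorem LambdaPhi_eigenfunction
    (Φ : E5 → ℝ) (hΦ : ContDiff ℝ (⊤ : ℕ∞) Φ)
    (hprofile : ∀ x : E5,
      lap Φ x - Φ x - (1 / 2) * fderiv ℝ Φ x x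
        + 6 * Φ x ^ 2 + fderiv ℝ (fun y => Φ y ^ 2) x x = 0)
    (v : E5 → ℝ) (hv : ∀ x : E5, v x = 2 * Φ x + fderiv ℝ Φ x x) :
    ∀ x : E5,
      -lap v x + v x + (1 / 2) * fderiv ℝ v x x
        - 2 * fderiv ℝ (fun y => Φ y * v y) x x - 12 * Φ x * v x = -v x := by
  have hd0 := d0 hΦ
  have hDf := Df_differentiable hΦ
  have hveq : v = fun y => 2 * Φ y + fderiv ℝ Φ y y := funext hv
  subst hveq
  intro x
  beta_reduce
  -- derivative of the square
  have hsq : ∀ y : E5, fderiv ℝ (fun z => Φ z ^ 2) y y = 2 * Φ y * fderiv ℝ Φ y y := by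
    intro y
    have hfun : (fun z => Φ z ^ 2) = fun z => Φ z * Φ z := by funext z; ring
    rw [hfun, fderiv_fun_mul (hd0 y) (hd0 y)]
    simp [smul_eq_mul]
    ring
  -- solve the profile equation for lap Φ
  have hlapΦ : ∀ y : E5, lap Φ y
      = Φ y + (1/2) * fderiv ℝ Φ y y - 6 * (Φ y * Φ y) - 2 * Φ y * fderiv ℝ Φ y y := by
    intro y
    have h := hprofile y
    rw [hsq y] at h
    have hp : Φ y ^ 2 = Φ y * Φ y := sq (Φ y)
    linarith
  have HΦ : HasFDerivAt Φ (fderiv ℝ Φ x) x := (hd0 x).hasFDerivAt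
  have HD : HasFDerivAt (fun y => fderiv ℝ Φ y y)
      (fderiv ℝ (fun y => fderiv ℝ Φ y y) x) x := (hDf x).hasFDerivAt
  have hDfx : fderiv ℝ (fun y => fderiv ℝ Φ y y) x x
      = fderiv ℝ (fderiv ℝ Φ) x x x + fderiv ℝ Φ x x := fderiv_Df hΦ x x
  -- derivative of lap Φ along x
  have hMlap : fderiv ℝ (lap Φ) x x
      = fderiv ℝ Φ x x
        + (1/2) * (fderiv ℝ (fderiv ℝ Φ) x x x + fderiv ℝ Φ x x)
        - 12 * Φ x * fderiv ℝ Φ x x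
        - (2 * Φ x * (fderiv ℝ (fderiv ℝ Φ) x x x + fderiv ℝ Φ x x)
            + 2 * fderiv ℝ Φ x x * fderiv ℝ Φ x x) := by
    rw [funext hlapΦ]
    have H := (((HΦ.fun_add (HD.const_mul (1/2))).fun_sub ((HΦ.fun_mul HΦ).const_mul 6)).fun_sub
        ((HΦ.const_mul 2).fun_mul HD)).fderiv
    rw [H]
    simp only [ContinuousLinearMap.add_apply, ContinuousLinearMap.sub_apply,
      ContinuousLinearMap.smul_apply, smul_eq_mul, ContinuousLinearMap.coe_add',
      ContinuousLinearMap.coe_sub', Pi.add_apply, Pi.sub_apply]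
    rw [hDfx]
    ring
  -- derivative of v along x
  have hDv : fderiv ℝ (fun y => 2 * Φ y + fderiv ℝ Φ y y) x x
      = 2 * fderiv ℝ Φ x x + (fderiv ℝ (fderiv ℝ Φ) x x x + fderiv ℝ Φ x x) := by
    rw [((HΦ.const_mul 2).fun_add HD).fderiv]
    simp only [ContinuousLinearMap.add_apply, ContinuousLinearMap.smul_apply, smul_eq_mul]
    try rw [hDfx]
  -- derivative of Φ * v along x
  have hPv : fderiv ℝ (fun y => Φ y * (2 * Φ y + fderiv ℝ Φ y y)) x x
      = Φ x * (2 * fderiv ℝ Φ x x + (fderiv ℝ (fderiv ℝ Φ) x x x + fderiv ℝ Φ x x))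
        + (2 * Φ x + fderiv ℝ Φ x x) * fderiv ℝ Φ x x := by
    rw [(HΦ.fun_mul ((HΦ.const_mul 2).fun_add HD)).fderiv]
    simp only [ContinuousLinearMap.add_apply, ContinuousLinearMap.smul_apply, smul_eq_mul]
    try rw [hDfx]
    try ring
  -- Laplacian of v
  have hlapv : lap (fun y => 2 * Φ y + fderiv ℝ Φ y y) x
      = 2 * lap Φ x + (fderiv ℝ (lap Φ) x x + 2 * lap Φ x) := by
    have h := lap_add (f := fun y => 2 * Φ y) (g := fun y => fderiv ℝ Φ y y)
      (contDiff_const.mul hΦ) (cDf hΦ) x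
    rw [lap_const_mul hΦ 2 x, lap_Df hΦ x] at h
    exact h
  rw [hlapv, hDv, hPv, hMlap, hlapΦ x]
  ring
end
end

section
/- Let λ < 0 and r₀ > 0. Suppose u₁, u₂ : (r₀,∞) → ℝ are C² solutions of −u'' − (4/r)u' + u + (r/2)u' = λu with Wronskian u₁'(r)u₂(r) − u₂'(r)u₁(r) = r^{−4} e^{r²/4}, satisfying for some C₀ > 0 and all r > r₀ the bounds |u₁(r)| ≤ C₀ r^{2(λ−1)}, |u₁'(r)| ≤ C₀ r^{2λ−3}, |u₂(r)| ≤ C₀ r^{−3−2λ} e^{r²/4}, |u₂'(r)| ≤ C₀ r^{−2−2λ} e^{r²/4}. Let f : (r₀,∞) → ℝ be continuous with M := sup_{r>r₀} r^{2(2−λ)} |f(r)| < ∞, and define τ(f)(r) = ( ∫_r^∞ f(s) u₂(s) s⁴ e^{−s²/4} ds ) u₁(r) − ( ∫_r^∞ f(s) u₁(s) s⁴ e^{−s²/4} ds ) u₂(r). Then τ(f) solves −v'' − (4/r)v' + v + (r/2)v' − λv = f on (r₀,∞), and there is a constant C (depending only on λ, r₀, C₀) with sup_{r>r₀} ( r^{2(2−λ)}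 |τ(f)(r)| + r^{2(2−λ)+1} |(τ(f))'(r)| ) ≤ C M. -/
open MeasureTheory Set Filter Topology Real

/-!
Write `w s = s⁴ e^{-s²/4}`, so that the Wronskian hypothesis reads `w · W(u₁, u₂) = 1`, and
`τ(f) = A u₁ - B u₂` with `A' = -f w u₂`, `B' = -f w u₁`. The terms coming from `A'`, `B'`
cancel in `τ(f)'`, so `τ(f)' = A u₁' - B u₂'`, and in `τ(f)''` they leave exactly the source
`f w W = f`.

For the estimate, `|f| ≤ M r^{2λ-4}` gives `|f u₂ w| ≤ M C₀ s⁻³`, hence `|A r| ≤ M C₀ r⁻²/2`,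
and `|f u₁ w| ≤ M C₀ s^{4λ-2} e^{-s²/4} ≤ M C₀ r^{4λ-3} s e^{-s²/4}` on `s > r` (as `λ < 0`),
hence `|B r| ≤ 2 M C₀ r^{4λ-3} e^{-r²/4}`. The Gaussian factors of `B` and of `u₂, u₂'` cancel,
and the powers of `r` in all four products `A u₁, B u₂, A u₁', B u₂'` exactly compensate the
weights `r^{2(2-λ)}`, `r^{2(2-λ)+1}` up to a factor `r⁻² ≤ r₀⁻²`.
-/

lemma hasDerivAt_integral_Ioi {g : ℝ → ℝ} {a r : ℝ} (hg : IntegrableOn g (Ioi a))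
    (hgc : ContinuousOn g (Ioi a)) (har : a < r) :
    HasDerivAt (fun x => ∫ s in Ioi x, g s) (-g r) r := by
  have hFTC : HasDerivAt (fun x => (∫ s in Ioi a, g s) - ∫ s in a..x, g s) (-g r) r := by
    refine (intervalIntegral.integral_hasDerivAt_right ?_ ?_ ?_).const_sub _
    · exact (intervalIntegrable_iff_integrableOn_Ioc_of_le har.le).2
        (hg.mono_set Ioc_subset_Ioi_self)
    · exact hgc.stronglyMeasurableAtFilter isOpen_Ioi r har
    · exact hgc.continuousAt (isOpen_Ioi.mem_nhds har)
  refine hFTC.congr_of_eventuallyEq ?_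
  filter_upwards [Ioi_mem_nhds har] with x hx
  rw [← intervalIntegral.integral_Ioi_sub_Ioi hg hx.le, sub_sub_cancel]

lemma integrableOn_of_abs_le {g h : ℝ → ℝ} {a : ℝ} (hgc : ContinuousOn g (Ioi a))
    (hh : IntegrableOn h (Ioi a)) (hgh : ∀ s, a < s → |g s| ≤ h s) :
    IntegrableOn g (Ioi a) :=
  hh.mono' (hgc.aestronglyMeasurable measurableSet_Ioi)
    ((ae_restrict_mem measurableSet_Ioi).mono fun s hs => hgh s hs)

lemma abs_integral_Ioi_le {g h : ℝ → ℝ} {a : ℝ} (hh : IntegrableOn h (Ioi a))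
    (hgh : ∀ s, a < s → |g s| ≤ h s) :
    |∫ s in Ioi a, g s| ≤ ∫ s in Ioi a, h s := by
  simpa only [Real.norm_eq_abs] using norm_integral_le_of_norm_le hh
    ((ae_restrict_mem measurableSet_Ioi).mono fun s hs =>
      (Real.norm_eq_abs (g s)).trans_le (hgh s hs))

lemma hasDerivAt_neg_two_mul_exp_neg_sq_div_four (s : ℝ) :
    HasDerivAt (fun t => -2 * exp (-(t ^ 2 / 4))) (s * exp (-(s ^ 2 / 4))) s := by
  have h : HasDerivAt (fun t : ℝ => -(t ^ 2 / 4)) (-(s / 2)) s := by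
    refine ((hasDerivAt_pow 2 s).div_const 4).neg.congr_deriv ?_
    ring
  refine (h.exp.const_mul (-2 : ℝ)).congr_deriv ?_
  ring

lemma tendsto_neg_two_mul_exp_neg_sq_div_four :
    Tendsto (fun t : ℝ => -2 * exp (-(t ^ 2 / 4))) atTop (𝓝 0) := by
  have h : Tendsto (fun t : ℝ => -(t ^ 2 / 4)) atTop atBot :=
    tendsto_neg_atTop_atBot.comp ((tendsto_pow_atTop two_ne_zero).atTop_div_const (by norm_num))
  simpa using (tendsto_exp_atBot.comp h).const_mul (-2 : ℝ)

lemma integrableOn_Ioi_mul_exp_neg_sq_div_four {r : ℝ} (hr : 0 ≤ r) :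
    IntegrableOn (fun s => s * exp (-(s ^ 2 / 4))) (Ioi r) :=
  integrableOn_Ioi_deriv_of_nonneg' (fun s _ => hasDerivAt_neg_two_mul_exp_neg_sq_div_four s)
    (fun _ hs => mul_nonneg (hr.trans hs.le) (exp_pos _).le)
    tendsto_neg_two_mul_exp_neg_sq_div_four

lemma integral_Ioi_mul_exp_neg_sq_div_four {r : ℝ} (hr : 0 ≤ r) :
    ∫ s in Ioi r, s * exp (-(s ^ 2 / 4)) = 2 * exp (-(r ^ 2 / 4)) := by
  rw [integral_Ioi_of_hasDerivAt_of_nonneg'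
    (fun s _ => hasDerivAt_neg_two_mul_exp_neg_sq_div_four s)
    (fun _ hs => mul_nonneg (hr.trans hs.le) (exp_pos _).le)
    tendsto_neg_two_mul_exp_neg_sq_div_four]
  ring

lemma abs_le_mul_rpow_neg_of_rpow_mul_abs_le {x y α M : ℝ} (hx : 0 < x)
    (h : x ^ α * |y| ≤ M) : |y| ≤ M * x ^ (-α) := by
  calc |y| = x ^ (-α) * (x ^ α * |y|) := by
        rw [← mul_assoc, ← rpow_add hx, neg_add_cancel, rpow_zero, one_mul]
    _ ≤ x ^ (-α) * M := by gcongr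
    _ = M * x ^ (-α) := mul_comm _ _

lemma rpow_mul_abs_mul_le {x a b K L α β γ δ : ℝ} (hx : 0 < x) (hK : 0 ≤ K)
    (ha : |a| ≤ K * x ^ β) (hb : |b| ≤ L * x ^ γ) (h : α + β + γ = δ) :
    x ^ α * |a * b| ≤ K * L * x ^ δ := by
  calc x ^ α * |a * b| ≤ x ^ α * ((K * x ^ β) * (L * x ^ γ)) := by
        rw [abs_mul]
        gcongr
    _ = K * L * x ^ δ := by rw [← h, rpow_add hx, rpow_add hx]; ring

lemma rpow_le_rpow_sub_one_mul {r s β : ℝ} (hr : 0 < r) (hrs : r ≤ s) (hβ : β ≤ 1) :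
    s ^ β ≤ r ^ (β - 1) * s := by
  have hs : 0 < s := hr.trans_le hrs
  calc s ^ β = s ^ (β - 1) * s := by rw [rpow_sub hs, rpow_one, div_mul_cancel₀ _ hs.ne']
    _ ≤ r ^ (β - 1) * s :=
      mul_le_mul_of_nonneg_right (rpow_le_rpow_of_nonpos hr hrs (by linarith)) hs.le

lemma rpow_mul_abs_sub_le {x α p q : ℝ} (hx : 0 ≤ x) :
    x ^ α * |p - q| ≤ x ^ α * |p| + x ^ α * |q| := by
  rw [← mul_add]
  exact mul_le_mul_of_nonneg_left (abs_sub p q) (rpow_nonneg hx α)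

lemma abs_mul_mul_pow_four_mul_exp_le {F U M L a b c s : ℝ} (hs : 0 < s) (hM : 0 ≤ M)
    (hF : |F| ≤ M * s ^ a) (hU : |U| ≤ L * s ^ b) (h : 4 + a + b = c) :
    |F * U * s ^ 4 * exp (-(s ^ 2 / 4))| ≤ M * L * s ^ c * exp (-(s ^ 2 / 4)) := by
  rw [abs_mul, abs_of_pos (exp_pos _), abs_mul _ (s ^ 4), abs_of_pos (by positivity : 0 < s ^ 4),
    mul_comm |F * U|, ← rpow_natCast]
  exact mul_le_mul_of_nonneg_right
    (rpow_mul_abs_mul_le (α := (4 : ℕ)) hs hM hF hU (by push_cast; linarith)) (exp_pos _).le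

lemma integrableOn_Ioi_of_abs_le_rpow {g : ℝ → ℝ} {r K β : ℝ} (hr : 0 < r) (hβ : β < -1)
    (hgc : ContinuousOn g (Ioi r)) (hg : ∀ s, r < s → |g s| ≤ K * s ^ β) :
    IntegrableOn g (Ioi r) :=
  integrableOn_of_abs_le hgc ((integrableOn_Ioi_rpow_of_lt hβ hr).const_mul K) hg

lemma abs_integral_Ioi_le_of_abs_le_rpow {g : ℝ → ℝ} {r K β : ℝ} (hr : 0 < r) (hβ : β < -1)
    (hg : ∀ s, r < s → |g s| ≤ K * s ^ β) :
    |∫ s in Ioi r, g s| ≤ K * (-r ^ (β + 1) / (β + 1)) := by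
  refine (abs_integral_Ioi_le ((integrableOn_Ioi_rpow_of_lt hβ hr).const_mul K) hg).trans_eq ?_
  rw [integral_const_mul, integral_Ioi_rpow_of_lt hβ hr]

section GaussianTail

variable {g : ℝ → ℝ} {r K β : ℝ}

lemma abs_le_mul_mul_exp_of_abs_le_rpow_mul_exp (hr : 0 < r) (hβ : β ≤ 0) (hK : 0 ≤ K)
    (hg : ∀ s, r < s → |g s| ≤ K * s ^ (β + 1) * exp (-(s ^ 2 / 4))) :
    ∀ s, r < s → |g s| ≤ K * r ^ β * (s * exp (-(s ^ 2 / 4))) := fun s hs => by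
  have h := rpow_le_rpow_sub_one_mul hr hs.le (by linarith : β + 1 ≤ 1)
  rw [add_sub_cancel_right] at h
  calc |g s| ≤ K * s ^ (β + 1) * exp (-(s ^ 2 / 4)) := hg s hs
    _ ≤ K * (r ^ β * s) * exp (-(s ^ 2 / 4)) := by gcongr
    _ = K * r ^ β * (s * exp (-(s ^ 2 / 4))) := by ring

lemma integrableOn_Ioi_of_abs_le_rpow_mul_exp (hr : 0 < r) (hβ : β ≤ 0) (hK : 0 ≤ K)
    (hgc : ContinuousOn g (Ioi r))
    (hg : ∀ s, r < s → |g s| ≤ K * s ^ (β + 1) * exp (-(s ^ 2 / 4))) :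
    IntegrableOn g (Ioi r) :=
  integrableOn_of_abs_le hgc ((integrableOn_Ioi_mul_exp_neg_sq_div_four hr.le).const_mul _)
    (abs_le_mul_mul_exp_of_abs_le_rpow_mul_exp hr hβ hK hg)

lemma abs_integral_Ioi_le_of_abs_le_rpow_mul_exp (hr : 0 < r) (hβ : β ≤ 0) (hK : 0 ≤ K)
    (hg : ∀ s, r < s → |g s| ≤ K * s ^ (β + 1) * exp (-(s ^ 2 / 4))) :
    |∫ s in Ioi r, g s| ≤ 2 * K * r ^ β * exp (-(r ^ 2 / 4)) := by
  refine (abs_integral_Ioi_le ((integrableOn_Ioi_mul_exp_neg_sq_div_four hr.le).const_mul _)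
    (abs_le_mul_mul_exp_of_abs_le_rpow_mul_exp hr hβ hK hg)).trans_eq ?_
  rw [integral_const_mul, integral_Ioi_mul_exp_neg_sq_div_four hr.le]
  ring

end GaussianTail

def variationOfConstants (A B u₁ u₂ : ℝ → ℝ) : ℝ → ℝ := fun x => A x * u₁ x - B x * u₂ x

section VariationOfConstants

variable {U : Set ℝ} {A B u₁ u₂ h : ℝ → ℝ} {r : ℝ}

lemma ContDiffOn.hasDerivAt_deriv_of_isOpen {u : ℝ → ℝ} (hu : ContDiffOn ℝ 2 u U)
    (hU : IsOpen U) (hr : r ∈ U) : HasDerivAt u (deriv u r) r :=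
  ((hu.differentiableOn (by norm_num)).differentiableAt (hU.mem_nhds hr)).hasDerivAt

lemma ContDiffOn.hasDerivAt_deriv_deriv_of_isOpen {u : ℝ → ℝ} (hu : ContDiffOn ℝ 2 u U)
    (hU : IsOpen U) (hr : r ∈ U) : HasDerivAt (deriv u) (deriv (deriv u) r) r :=
  (((hu.deriv_of_isOpen hU (by norm_num : (1 : WithTop ℕ∞) + 1 ≤ 2)).differentiableOn
    one_ne_zero).differentiableAt (hU.mem_nhds hr)).hasDerivAt

lemma hasDerivAt_variationOfConstants (hU : IsOpen U) (hu₁ : ContDiffOn ℝ 2 u₁ U)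
    (hu₂ : ContDiffOn ℝ 2 u₂ U) (hA : ∀ x ∈ U, HasDerivAt A (-(h x * u₂ x)) x)
    (hB : ∀ x ∈ U, HasDerivAt B (-(h x * u₁ x)) x) (hr : r ∈ U) :
    HasDerivAt (variationOfConstants A B u₁ u₂) (A r * deriv u₁ r - B r * deriv u₂ r) r := by
  refine (((hA r hr).mul (hu₁.hasDerivAt_deriv_of_isOpen hU hr)).sub
    ((hB r hr).mul (hu₂.hasDerivAt_deriv_of_isOpen hU hr))).congr_deriv ?_
  ring

lemma variationOfConstants_ode {P Q : ℝ → ℝ} (hU : IsOpen U) (hu₁ : ContDiffOn ℝ 2 u₁ U)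
    (hu₂ : ContDiffOn ℝ 2 u₂ U)
    (hode₁ : ∀ x ∈ U, -deriv (deriv u₁) x + P x * deriv u₁ x + Q x * u₁ x = 0)
    (hode₂ : ∀ x ∈ U, -deriv (deriv u₂) x + P x * deriv u₂ x + Q x * u₂ x = 0)
    (hA : ∀ x ∈ U, HasDerivAt A (-(h x * u₂ x)) x)
    (hB : ∀ x ∈ U, HasDerivAt B (-(h x * u₁ x)) x) (hr : r ∈ U) :
    -deriv (deriv (variationOfConstants A B u₁ u₂)) r
        + P r * deriv (variationOfConstants A B u₁ u₂) r
        + Q r * variationOfConstants A B u₁ u₂ r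
      = h r * (deriv u₁ r * u₂ r - deriv u₂ r * u₁ r) := by
  have hv' : deriv (variationOfConstants A B u₁ u₂) =ᶠ[𝓝 r]
      fun x => A x * deriv u₁ x - B x * deriv u₂ x := by
    filter_upwards [hU.mem_nhds hr] with x hx
    exact (hasDerivAt_variationOfConstants hU hu₁ hu₂ hA hB hx).deriv
  have hv'' : HasDerivAt (fun x => A x * deriv u₁ x - B x * deriv u₂ x) _ r :=
    ((hA r hr).mul (hu₁.hasDerivAt_deriv_deriv_of_isOpen hU hr)).sub
      ((hB r hr).mul (hu₂.hasDerivAt_deriv_deriv_of_isOpen hU hr))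
  rw [hv'.deriv_eq, hv''.deriv, (hasDerivAt_variationOfConstants hU hu₁ hu₂ hA hB hr).deriv]
  simp only [variationOfConstants]
  linear_combination A r * hode₁ r hr - B r * hode₂ r hr

end VariationOfConstants

/-- The paper's `τ(f)` is `variationOfConstants (tailIntegral f u₂) (tailIntegral f u₁) u₁ u₂`;
the weight `s⁴ e^{-s²/4}` is the reciprocal of the Wronskian of `u₁, u₂`. -/
noncomputable def tailIntegral (f u : ℝ → ℝ) (r : ℝ) : ℝ :=
  ∫ s in Ioi r, f s * u s * s ^ 4 * exp (-(s ^ 2 / 4))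

section TailIntegral

variable {f u : ℝ → ℝ} {l r₀ C₀ M r : ℝ}

lemma hasDerivAt_tailIntegral (hf : ContinuousOn f (Ioi r₀)) (hu : ContinuousOn u (Ioi r₀))
    (hint : IntegrableOn (fun s => f s * u s * s ^ 4 * exp (-(s ^ 2 / 4))) (Ioi r₀))
    (hr : r₀ < r) :
    HasDerivAt (tailIntegral f u) (-(f r * r ^ 4 * exp (-(r ^ 2 / 4)) * u r)) r :=
  (hasDerivAt_integral_Ioi hint (by fun_prop) hr).congr_deriv (by ring)

lemma abs_integrand_le_of_growing (hr₀ : 0 < r₀) (hM : 0 ≤ M)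
    (hf : ∀ s, r₀ < s → |f s| ≤ M * s ^ (-(2 * (2 - l))))
    (hu : ∀ s, r₀ < s → |u s| ≤ C₀ * s ^ (-3 - 2 * l) * exp (s ^ 2 / 4)) :
    ∀ s, r₀ < s → |f s * u s * s ^ 4 * exp (-(s ^ 2 / 4))| ≤ M * C₀ * s ^ (-3 : ℝ) := by
  intro s hs
  refine (abs_mul_mul_pow_four_mul_exp_le (c := -3) (L := C₀ * exp (s ^ 2 / 4)) (hr₀.trans hs) hM
    (hf s hs) (by rw [mul_right_comm]; exact hu s hs) (by ring)).trans_eq ?_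
  rw [exp_neg]
  field_simp

lemma hasDerivAt_tailIntegral_of_growing (hr₀ : 0 < r₀) (hM : 0 ≤ M)
    (hfc : ContinuousOn f (Ioi r₀)) (huc : ContinuousOn u (Ioi r₀))
    (hf : ∀ s, r₀ < s → |f s| ≤ M * s ^ (-(2 * (2 - l))))
    (hu : ∀ s, r₀ < s → |u s| ≤ C₀ * s ^ (-3 - 2 * l) * exp (s ^ 2 / 4)) (hr : r₀ < r) :
    HasDerivAt (tailIntegral f u) (-(f r * r ^ 4 * exp (-(r ^ 2 / 4)) * u r)) r :=
  hasDerivAt_tailIntegral hfc huc (integrableOn_Ioi_of_abs_le_rpow hr₀ (by norm_num)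
    (by fun_prop) (abs_integrand_le_of_growing hr₀ hM hf hu)) hr

lemma abs_tailIntegral_le_of_growing (hr₀ : 0 < r₀) (hM : 0 ≤ M)
    (hf : ∀ s, r₀ < s → |f s| ≤ M * s ^ (-(2 * (2 - l))))
    (hu : ∀ s, r₀ < s → |u s| ≤ C₀ * s ^ (-3 - 2 * l) * exp (s ^ 2 / 4)) (hr : r₀ < r) :
    |tailIntegral f u r| ≤ M * C₀ / 2 * r ^ (-2 : ℝ) := by
  refine (abs_integral_Ioi_le_of_abs_le_rpow (hr₀.trans hr) (by norm_num)
    fun s hs => abs_integrand_le_of_growing hr₀ hM hf hu s (hr.trans hs)).trans_eq ?_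
  rw [show (-3 : ℝ) + 1 = -2 by norm_num]
  ring

lemma abs_integrand_le_of_decaying (hr₀ : 0 < r₀) (hM : 0 ≤ M)
    (hf : ∀ s, r₀ < s → |f s| ≤ M * s ^ (-(2 * (2 - l))))
    (hu : ∀ s, r₀ < s → |u s| ≤ C₀ * s ^ (2 * (l - 1))) :
    ∀ s, r₀ < s → |f s * u s * s ^ 4 * exp (-(s ^ 2 / 4))| ≤
      M * C₀ * s ^ (4 * l - 3 + 1) * exp (-(s ^ 2 / 4)) :=
  fun s hs => abs_mul_mul_pow_four_mul_exp_le (hr₀.trans hs) hM (hf s hs) (hu s hs) (by ring)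

lemma hasDerivAt_tailIntegral_of_decaying (hl : l ≤ 3 / 4) (hr₀ : 0 < r₀) (hM : 0 ≤ M)
    (hC₀ : 0 ≤ C₀) (hfc : ContinuousOn f (Ioi r₀)) (huc : ContinuousOn u (Ioi r₀))
    (hf : ∀ s, r₀ < s → |f s| ≤ M * s ^ (-(2 * (2 - l))))
    (hu : ∀ s, r₀ < s → |u s| ≤ C₀ * s ^ (2 * (l - 1))) (hr : r₀ < r) :
    HasDerivAt (tailIntegral f u) (-(f r * r ^ 4 * exp (-(r ^ 2 / 4)) * u r)) r :=
  hasDerivAt_tailIntegral hfc huc (integrableOn_Ioi_of_abs_le_rpow_mul_exp hr₀ (by linarith)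
    (by positivity) (by fun_prop) (abs_integrand_le_of_decaying hr₀ hM hf hu)) hr

lemma abs_tailIntegral_le_of_decaying (hl : l ≤ 3 / 4) (hr₀ : 0 < r₀) (hM : 0 ≤ M)
    (hC₀ : 0 ≤ C₀) (hf : ∀ s, r₀ < s → |f s| ≤ M * s ^ (-(2 * (2 - l))))
    (hu : ∀ s, r₀ < s → |u s| ≤ C₀ * s ^ (2 * (l - 1))) (hr : r₀ < r) :
    |tailIntegral f u r| ≤ 2 * (M * C₀) * r ^ (4 * l - 3) * exp (-(r ^ 2 / 4)) :=
  abs_integral_Ioi_le_of_abs_le_rpow_mul_exp (hr₀.trans hr) (by linarith) (by positivity)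
    fun s hs => abs_integrand_le_of_decaying hr₀ hM hf hu s (hr.trans hs)

end TailIntegral

lemma radial_ode_variationOfConstants {l r₀ r : ℝ} {A B f u₁ u₂ : ℝ → ℝ} (hr₀ : 0 < r₀)
    (hu₁ : ContDiffOn ℝ 2 u₁ (Ioi r₀)) (hu₂ : ContDiffOn ℝ 2 u₂ (Ioi r₀))
    (hode₁ : ∀ r, r₀ < r →
      -(deriv (deriv u₁) r) - (4 / r) * deriv u₁ r + u₁ r + (r / 2) * deriv u₁ r = l * u₁ r)
    (hode₂ : ∀ r, r₀ < r →
      -(deriv (deriv u₂) r) - (4 / r) * deriv u₂ r + u₂ r + (r / 2) * deriv u₂ r = l * u₂ r)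
    (hW : ∀ r, r₀ < r → deriv u₁ r * u₂ r - deriv u₂ r * u₁ r = exp (r ^ 2 / 4) / r ^ 4)
    (hA : ∀ x ∈ Ioi r₀, HasDerivAt A (-(f x * x ^ 4 * exp (-(x ^ 2 / 4)) * u₂ x)) x)
    (hB : ∀ x ∈ Ioi r₀, HasDerivAt B (-(f x * x ^ 4 * exp (-(x ^ 2 / 4)) * u₁ x)) x)
    (hr : r₀ < r) :
    let v := variationOfConstants A B u₁ u₂;
    -(deriv (deriv v) r) - (4 / r) * deriv v r + v r + (r / 2) * deriv v r - l * v r = f r := by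
  have hode := variationOfConstants_ode (P := fun r => r / 2 - 4 / r) (Q := fun _ => 1 - l)
    isOpen_Ioi hu₁ hu₂ (fun x hx => by linear_combination hode₁ x hx)
    (fun x hx => by linear_combination hode₂ x hx) hA hB hr
  have hsource : f r * r ^ 4 * exp (-(r ^ 2 / 4)) * (exp (r ^ 2 / 4) / r ^ 4) = f r := by
    have hr0 : r ≠ 0 := (hr₀.trans hr).ne'
    rw [exp_neg]
    field_simp
  rw [hW r hr] at hode
  linear_combination hode + hsource

lemma weighted_sum_le_of_coeff_bounds {l r₀ r C₀ M a b u₁ u₂ u₁' u₂' : ℝ} (hr₀ : 0 < r₀)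
    (hr : r₀ < r) (hM : 0 ≤ M) (hC₀ : 0 ≤ C₀)
    (ha : |a| ≤ M * C₀ / 2 * r ^ (-2 : ℝ))
    (hb : |b| ≤ 2 * (M * C₀) * r ^ (4 * l - 3) * exp (-(r ^ 2 / 4)))
    (hu₁ : |u₁| ≤ C₀ * r ^ (2 * (l - 1))) (hu₁' : |u₁'| ≤ C₀ * r ^ (2 * l - 3))
    (hu₂ : |u₂| ≤ C₀ * r ^ (-3 - 2 * l) * exp (r ^ 2 / 4))
    (hu₂' : |u₂'| ≤ C₀ * r ^ (-2 - 2 * l) * exp (r ^ 2 / 4)) :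
    r ^ (2 * (2 - l)) * |a * u₁ - b * u₂| + r ^ (2 * (2 - l) + 1) * |a * u₁' - b * u₂'|
      ≤ C₀ ^ 2 * (3 + 2 * r₀ ^ (-2 : ℝ)) * M := by
  have hr' : 0 < r := hr₀.trans hr
  have hb' : |b| ≤ 2 * M * C₀ * exp (-(r ^ 2 / 4)) * r ^ (4 * l - 3) := by linarith
  have hv₂ : |u₂| ≤ C₀ * exp (r ^ 2 / 4) * r ^ (-3 - 2 * l) := by linarith
  have hv₂' : |u₂'| ≤ C₀ * exp (r ^ 2 / 4) * r ^ (-2 - 2 * l) := by linarith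
  have hexp : 2 * M * C₀ * exp (-(r ^ 2 / 4)) * (C₀ * exp (r ^ 2 / 4)) = 2 * M * C₀ ^ 2 := by
    rw [exp_neg]; field_simp
  have hK₁ : 0 ≤ M * C₀ / 2 := by positivity
  have hK₂ : 0 ≤ 2 * M * C₀ * exp (-(r ^ 2 / 4)) := by positivity
  have h₁ := rpow_mul_abs_mul_le (α := 2 * (2 - l)) (δ := 0) hr' hK₁ ha hu₁ (by ring)
  have h₂ := rpow_mul_abs_mul_le (α := 2 * (2 - l)) (δ := -2) hr' hK₂ hb' hv₂ (by ring)
  have h₃ := rpow_mul_abs_mul_le (α := 2 * (2 - l) + 1) (δ := 0) hr' hK₁ ha hu₁' (by ring)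
  have h₄ := rpow_mul_abs_mul_le (α := 2 * (2 - l) + 1) (δ := 0) hr' hK₂ hb' hv₂' (by ring)
  rw [hexp] at h₂ h₄
  rw [rpow_zero] at h₁ h₃ h₄
  have hr₀r : 2 * M * C₀ ^ 2 * r ^ (-2 : ℝ) ≤ 2 * M * C₀ ^ 2 * r₀ ^ (-2 : ℝ) :=
    mul_le_mul_of_nonneg_left (rpow_le_rpow_of_nonpos hr₀ hr.le (by norm_num)) (by positivity)
  linarith [rpow_mul_abs_sub_le (α := 2 * (2 - l)) (p := a * u₁) (q := b * u₂) hr'.le,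
    rpow_mul_abs_sub_le (α := 2 * (2 - l) + 1) (p := a * u₁') (q := b * u₂') hr'.le]

/-- Continuity of the resolvent: the variation-of-constants solution
`τ(f) = (∫_r^∞ f u₂ s⁴ e^{−s²/4} ds) u₁ − (∫_r^∞ f u₁ s⁴ e^{−s²/4} ds) u₂`
solves `(L^∞ − λ)(τ(f)) = f` on `(r₀,∞)` and satisfies the weighted bound
`sup_{r>r₀} ( r^{2(2−λ)} |τ(f)| + r^{2(2−λ)+1} |τ(f)'| ) ≲ sup_{r>r₀} r^{2(2−λ)} |f|`,
with a constant depending only on `λ, r₀, C₀`. -/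
theorem resolvent_estimate_Linf
    (l : ℝ) (hl : l < 0) (r₀ : ℝ) (hr₀ : 0 < r₀) (C₀ : ℝ) (hC₀ : 0 < C₀)
    (u₁ u₂ : ℝ → ℝ)
    (hu₁ : ContDiffOn ℝ 2 u₁ (Set.Ioi r₀)) (hu₂ : ContDiffOn ℝ 2 u₂ (Set.Ioi r₀))
    (hode₁ : ∀ r : ℝ, r₀ < r →
      -(deriv (deriv u₁) r) - (4 / r) * deriv u₁ r + u₁ r + (r / 2) * deriv u₁ r = l * u₁ r)
    (hode₂ : ∀ r : ℝ, r₀ < r →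
      -(deriv (deriv u₂) r) - (4 / r) * deriv u₂ r + u₂ r + (r / 2) * deriv u₂ r = l * u₂ r)
    (hW : ∀ r : ℝ, r₀ < r →
      deriv u₁ r * u₂ r - deriv u₂ r * u₁ r = Real.exp (r ^ 2 / 4) / r ^ 4)
    (hb₁ : ∀ r : ℝ, r₀ < r → |u₁ r| ≤ C₀ * r ^ (2 * (l - 1)))
    (hb₁' : ∀ r : ℝ, r₀ < r → |deriv u₁ r| ≤ C₀ * r ^ (2 * l - 3))
    (hb₂ : ∀ r : ℝ, r₀ < r → |u₂ r| ≤ C₀ * r ^ (-3 - 2 * l) * Real.exp (r ^ 2 / 4))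
    (hb₂' : ∀ r : ℝ, r₀ < r → |deriv u₂ r| ≤ C₀ * r ^ (-2 - 2 * l) * Real.exp (r ^ 2 / 4)) :
    ∃ C : ℝ, 0 < C ∧
      ∀ f : ℝ → ℝ, ContinuousOn f (Set.Ioi r₀) →
        ∀ M : ℝ, (∀ r : ℝ, r₀ < r → r ^ (2 * (2 - l)) * |f r| ≤ M) →
          ∀ v : ℝ → ℝ,
            (∀ r : ℝ, v r =
              (∫ s in Set.Ioi r, f s * u₂ s * s ^ 4 * Real.exp (-(s ^ 2 / 4))) * u₁ r
              - (∫ s in Set.Ioi r, f s * u₁ s * s ^ 4 * Real.exp (-(s ^ 2 / 4))) * u₂ r) →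
            (∀ r : ℝ, r₀ < r →
              -(deriv (deriv v) r) - (4 / r) * deriv v r + v r + (r / 2) * deriv v r
                - l * v r = f r) ∧
            (∀ r : ℝ, r₀ < r →
              r ^ (2 * (2 - l)) * |v r| + r ^ (2 * (2 - l) + 1) * |deriv v r| ≤ C * M) := by
  refine ⟨C₀ ^ 2 * (3 + 2 * r₀ ^ (-2 : ℝ)), by positivity, fun f hf M hM v hv => ?_⟩
  have hM₀ : 0 ≤ M := (by positivity : 0 ≤ (r₀ + 1) ^ (2 * (2 - l)) * |f (r₀ + 1)|).trans
    (hM _ (by linarith))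
  have hf' : ∀ s, r₀ < s → |f s| ≤ M * s ^ (-(2 * (2 - l))) := fun s hs =>
    abs_le_mul_rpow_neg_of_rpow_mul_abs_le (hr₀.trans hs) (hM s hs)
  have hl' : l ≤ 3 / 4 := by linarith
  have hA : ∀ r ∈ Ioi r₀, HasDerivAt (tailIntegral f u₂) _ r := fun r hr =>
    hasDerivAt_tailIntegral_of_growing hr₀ hM₀ hf hu₂.continuousOn hf' hb₂ hr
  have hB : ∀ r ∈ Ioi r₀, HasDerivAt (tailIntegral f u₁) _ r := fun r hr =>
    hasDerivAt_tailIntegral_of_decaying hl' hr₀ hM₀ hC₀.le hf hu₁.continuousOn hf' hb₁ hr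
  obtain rfl : v = variationOfConstants (tailIntegral f u₂) (tailIntegral f u₁) u₁ u₂ :=
    funext hv
  refine ⟨fun r hr => radial_ode_variationOfConstants hr₀ hu₁ hu₂ hode₁ hode₂ hW hA hB hr,
    fun r hr => ?_⟩
  rw [(hasDerivAt_variationOfConstants isOpen_Ioi hu₁ hu₂ hA hB hr).deriv]
  exact weighted_sum_le_of_coeff_bounds hr₀ hr hM₀ hC₀.le
    (abs_tailIntegral_le_of_growing hr₀ hM₀ hf' hb₂ hr)
    (abs_tailIntegral_le_of_decaying hl' hr₀ hM₀ hC₀.le hf' hb₁ hr)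
    (hb₁ r hr) (hb₁' r hr) (hb₂ r hr) (hb₂' r hr)
end
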